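/- Let H be a graph with χ(H) = k, where k ≥ 2. Let G be formed from k vertex-disjoint copies H¹,…,Hᵏ of H by adding, for every k-tuple (v¹,…,vᵏ) ∈ V(H¹)×⋯×V(Hᵏ), a new vertex w(v¹,…,vᵏ) adjacent exactly to v¹,…,vᵏ. Then χ(G) = k + 1. -/

import Mathlib

/-!
Colour the copies of `H` with `χ(H) = k` colours and every new vertex with one extra colour.
Conversely, in a `k`-colouring of the whole graph each copy of `H` sees all `k` colours, so
choosing in the `i`-th copy a vertex of colour `i` yields a new vertex all of whose `k`
neighbours carry distinct colours, leaving no colour for it.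
-/

/-- The construction adding, for each `k`-tuple of vertices across `k` disjoint
copies of `H`, a new vertex adjacent exactly to the vertices of the tuple. -/
def tupleExtension {V : Type*} (H : SimpleGraph V) (k : ℕ) :
    SimpleGraph ((Fin k × V) ⊕ (Fin k → V)) :=
  SimpleGraph.fromRel fun a b =>
    match a, b with
    | Sum.inl (i, u), Sum.inl (j, v) => i = j ∧ H.Adj u v
    | Sum.inl (i, u), Sum.inr f => f i = u
    | Sum.inr f, Sum.inl (i, u) => f i = u
    | Sum.inr _, Sum.inr _ => False

namespace tupleExtension

open SimpleGraph

variable {V : Type*} {H : SimpleGraph V} {k : ℕ}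

theorem adj_inl_inl {i j : Fin k} {u v : V} :
    (tupleExtension H k).Adj (.inl (i, u)) (.inl (j, v)) ↔ i = j ∧ H.Adj u v := by
  simp only [tupleExtension, fromRel_adj, ne_eq, Sum.inl.injEq, Prod.mk.injEq]
  constructor
  · rintro ⟨-, h | h⟩
    · exact h
    · exact ⟨h.1.symm, h.2.symm⟩
  · rintro ⟨rfl, h⟩
    exact ⟨fun h' => h.ne h'.2, .inl ⟨rfl, h⟩⟩

theorem adj_inr_inl {f : Fin k → V} {i : Fin k} :
    (tupleExtension H k).Adj (.inr f) (.inl (i, f i)) :=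
  ⟨by simp, .inl rfl⟩

theorem not_adj_inr_inr {f g : Fin k → V} :
    ¬(tupleExtension H k).Adj (.inr f) (.inr g) :=
  fun h => h.2.elim id id

variable (H k) in
def copyHom (i : Fin k) : H →g tupleExtension H k where
  toFun u := .inl (i, u)
  map_rel' h := adj_inl_inl.2 ⟨rfl, h⟩

theorem colorable_succ {n : ℕ} (hH : H.Colorable n) :
    (tupleExtension H k).Colorable (n + 1) := by
  obtain ⟨C⟩ := hH
  refine ⟨Coloring.mk (Sum.elim (fun p => (C p.2).castSucc) fun _ => Fin.last n) ?_⟩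
  rintro (⟨i, u⟩ | f) (⟨j, v⟩ | g) hadj
  · simpa using C.valid (adj_inl_inl.1 hadj).2
  · simp [(Fin.castSucc_lt_last (C u)).ne]
  · simp [(Fin.castSucc_lt_last (C v)).ne']
  · exact (not_adj_inr_inr hadj).elim

theorem not_colorable (hH : (k : ℕ∞) ≤ H.chromaticNumber) :
    ¬(tupleExtension H k).Colorable k := by
  rintro ⟨D⟩
  have hsurj (i : Fin k) : Function.Surjective (D.comp (copyHom H k i)) :=
    le_chromaticNumber_iff_forall_surjective.1 hH _
  choose f hf using fun i => hsurj i i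
  exact D.valid adj_inr_inl (hf (D (.inr f))).symm

end tupleExtension

theorem stmt_3_general {V : Type*} (H : SimpleGraph V) (k : ℕ)
    (hχ : H.chromaticNumber = k) :
    (tupleExtension H k).chromaticNumber = (k : ℕ∞) + 1 := by
  rw [SimpleGraph.chromaticNumber_eq_iff_colorable_not_colorable]
  have hH : H.Colorable k := by
    rw [← SimpleGraph.chromaticNumber_le_iff_colorable, hχ]
  exact ⟨tupleExtension.colorable_succ hH, tupleExtension.not_colorable hχ.ge⟩

theorem stmt_3 {V : Type*} (H : SimpleGraph V) (k : ℕ) (hk : 2 ≤ k)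
    (hχ : H.chromaticNumber = k) :
    (tupleExtension H k).chromaticNumber = (k : ℕ∞) + 1 :=
  stmt_3_general H k hχ
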